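/- arXiv:1006.1176 — 2 statements merged into one kernel-verified Lean document; each statement's English description precedes it below -/
import Mathlib

section
/- Let (α, v) be a cocycle crossed action of a group G on a group U, H ⊴ G a normal subgroup, s : G/H → G a section with s(ē) = e, m(p,q) := s(pq)⁻¹ s(p) s(q), and c(p,q) := v(s(p), s(q)) · v(s(pq), m(p,q))⁻¹. Then (without assuming v trivial on H) for all p, q, r ∈ G/H one has: c(p,q) · α_{s(pq)}( δv(s(r), m(p,q))⁻¹ ) · c(pq,r) · α_{s(pqr)}( v(m(pq,r), s(r)⁻¹ m(p,q) s(r)) ) = α_{s(p)}( c(q,r) ) · c(p, qr) · α_{s(pqr)}( v(m(p,qr), m(q,r)) ), where δv(g,n) = v(g,g⁻¹ng) v(n,g)⁻¹. -/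
/-!
Write `a = s(p)`, `b = s(q)`, `d = s(r)` and let `x`, `y`, `z` stand for `s(pq)`, `s(qr)`, `s(pqr)`.
The cocycle identity, read as `α_g(v(h,k)) = v(g,h) v(gh,k) v(g,hk)⁻¹`, turns every `α`-term
into a word in values of `v`. After this substitution both sides collapse to
`v(a,b) v(ab,d) v(z, z⁻¹abd)⁻¹`, the left side along the bracketing `(pq)r` and the right side
along `p(qr)`.
-/

section CocycleCrossedAction

variable {G U : Type*} [Group G] [Group U] {α : G → MulAut U} {v : G → G → U}

theorem apply_eq_of_cocycle
    (hcoc : ∀ g h k : G, v g h * v (g * h) k = α g (v h k) * v g (h * k)) (g h k : G) :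
    α g (v h k) = v g h * v (g * h) k * (v g (h * k))⁻¹ := by
  rw [eq_mul_inv_iff_mul_eq, ← hcoc]

theorem apply_mul_inv_eq_of_mul_eq
    (hcoc : ∀ g h k : G, v g h * v (g * h) k = α g (v h k) * v g (h * k))
    {h k h' k' : G} (hkk' : h * k = h' * k') (g : G) :
    α g (v h k * (v h' k')⁻¹) = v g h * v (g * h) k * (v (g * h') k')⁻¹ * (v g h')⁻¹ := by
  rw [map_mul, map_inv, apply_eq_of_cocycle hcoc, apply_eq_of_cocycle hcoc, hkk']
  group

theorem left_bracketing_eq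
    (hcoc : ∀ g h k : G, v g h * v (g * h) k = α g (v h k) * v g (h * k)) (a b d x z : G) :
    v a b * (v x (x⁻¹ * a * b))⁻¹ *
        α x ((v d (d⁻¹ * (x⁻¹ * a * b) * d) * (v (x⁻¹ * a * b) d)⁻¹)⁻¹) *
        (v x d * (v z (z⁻¹ * x * d))⁻¹) *
        α z (v (z⁻¹ * x * d) (d⁻¹ * (x⁻¹ * a * b) * d)) =
      v a b * v (a * b) d * (v z (z⁻¹ * a * b * d))⁻¹ := by
  have hmul : x⁻¹ * a * b * d = d * (d⁻¹ * (x⁻¹ * a * b) * d) := by group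
  rw [mul_inv_rev, inv_inv, apply_mul_inv_eq_of_mul_eq hcoc hmul, apply_eq_of_cocycle hcoc]
  have hxn : x * (x⁻¹ * a * b) = a * b := by group
  have hzn : z * (z⁻¹ * x * d) = x * d := by group
  have hzw : z⁻¹ * x * d * (d⁻¹ * (x⁻¹ * a * b) * d) = z⁻¹ * a * b * d := by group
  rw [hxn, hzn, hzw]
  group

theorem right_bracketing_eq
    (hcoc : ∀ g h k : G, v g h * v (g * h) k = α g (v h k) * v g (h * k)) (a b d y z : G) :
    α a (v b d * (v y (y⁻¹ * b * d))⁻¹) * (v a y * (v z (z⁻¹ * a * y))⁻¹) *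
        α z (v (z⁻¹ * a * y) (y⁻¹ * b * d)) =
      v a b * v (a * b) d * (v z (z⁻¹ * a * b * d))⁻¹ := by
  have hmul : b * d = y * (y⁻¹ * b * d) := by group
  rw [apply_mul_inv_eq_of_mul_eq hcoc hmul, apply_eq_of_cocycle hcoc]
  have hzm : z * (z⁻¹ * a * y) = a * y := by group
  have hzw : z⁻¹ * a * y * (y⁻¹ * b * d) = z⁻¹ * a * b * d := by group
  rw [hzm, hzw]
  group

end CocycleCrossedAction

theorem stmt5_general {G U : Type*} [Group G] [Group U]
    (α : G → MulAut U) (v : G → G → U)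
    (hcoc : ∀ g h k : G, v g h * v (g * h) k = α g (v h k) * v g (h * k))
    (H : Subgroup G) [H.Normal]
    (s : G ⧸ H → G)
    (m : G ⧸ H → G ⧸ H → G)
    (hm : ∀ p q : G ⧸ H, m p q = (s (p * q))⁻¹ * s p * s q)
    (c : G ⧸ H → G ⧸ H → U)
    (hc : ∀ p q : G ⧸ H, c p q = v (s p) (s q) * (v (s (p * q)) (m p q))⁻¹)
    (δv : G → G → U)
    (hδ : ∀ g n : G, δv g n = v g (g⁻¹ * n * g) * (v n g)⁻¹) :
    ∀ p q r : G ⧸ H,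
      c p q * α (s (p * q)) ((δv (s r) (m p q))⁻¹) * c (p * q) r *
          α (s (p * q * r)) (v (m (p * q) r) ((s r)⁻¹ * m p q * s r)) =
        α (s p) (c q r) * c p (q * r) *
          α (s (p * q * r)) (v (m p (q * r)) (m q r)) := by
  intro p q r
  simp only [hc, hδ, hm, ← mul_assoc p q r]
  rw [left_bracketing_eq hcoc, right_bracketing_eq hcoc]

/-- The general (no triviality of `v` on `H`) 2-cocycle-type identity:
`c(p,q)·α_{s(pq)}(δv(s(r),m(p,q))⁻¹)·c(pq,r)·α_{s(pqr)}(v(m(pq,r), s(r)⁻¹m(p,q)s(r)))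
  = α_{s(p)}(c(q,r))·c(p,qr)·α_{s(pqr)}(v(m(p,qr), m(q,r)))`. -/
theorem stmt5 {G U : Type*} [Group G] [Group U]
    (α : G → MulAut U) (v : G → G → U)
    (hα1 : α 1 = 1)
    (hv1 : ∀ h : G, v 1 h = 1) (hv2 : ∀ g : G, v g 1 = 1)
    (hAd : ∀ g h : G, ∀ x : U, α g (α h x) = v g h * α (g * h) x * (v g h)⁻¹)
    (hcoc : ∀ g h k : G, v g h * v (g * h) k = α g (v h k) * v g (h * k))
    (H : Subgroup G) [H.Normal]
    (s : G ⧸ H → G)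
    (hs : ∀ p : G ⧸ H, (QuotientGroup.mk (s p) : G ⧸ H) = p)
    (hse : s 1 = 1)
    (m : G ⧸ H → G ⧸ H → G)
    (hm : ∀ p q : G ⧸ H, m p q = (s (p * q))⁻¹ * s p * s q)
    (c : G ⧸ H → G ⧸ H → U)
    (hc : ∀ p q : G ⧸ H, c p q = v (s p) (s q) * (v (s (p * q)) (m p q))⁻¹)
    (δv : G → G → U)
    (hδ : ∀ g n : G, δv g n = v g (g⁻¹ * n * g) * (v n g)⁻¹) :
    ∀ p q r : G ⧸ H,
      c p q * α (s (p * q)) ((δv (s r) (m p q))⁻¹) * c (p * q) r *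
          α (s (p * q * r)) (v (m (p * q) r) ((s r)⁻¹ * m p q * s r)) =
        α (s p) (c q r) * c p (q * r) *
          α (s (p * q * r)) (v (m p (q * r)) (m q r)) :=
  stmt5_general α v hcoc H s m hm c hc δv hδ
end

section
/- Let (α, v) be a cocycle crossed action of a group G on a group U, H ⊴ G normal with α_n inner for each n ∈ H, and H̄ = { (u⁻¹,n) : n ∈ H, Ad(u) = α_n } ⊆ U ⋊_v G. For g ∈ G define Φ_g : H̄ → H̄ by Φ_g(x) = (1,g) x (1,g)⁻¹. Then each Φ_g is a well-defined automorphism of H̄ and Φ_g ∘ Φ_h = Φ_{gh} for all g, h ∈ G; i.e. Φ defines an action of G on H̄, even though g ↦ (1,g) is in general not a group homomorphism into U ⋊_v G. -/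
/-!
`U ⋊_v G` is an honest group: the cocycle identity is exactly what makes its multiplication
associative. Inside it, `H̄` is the intersection of the normal subgroup `proj⁻¹(H)` with the
centralizer of the normal subgroup `ker proj = U × {e}`, hence normal, so conjugation by `(1,g)`
restricts to an automorphism of `H̄`. On the centralizer of `ker proj`, conjugation by `a` depends
only on `proj a`; as `(1,g)(1,h)` and `(1,gh)` both lie over `gh`, this gives `Φ_g ∘ Φ_h = Φ_{gh}`.
-/

structure CocycleCrossedAction (G U : Type*) [Group G] [Group U] where
  α : G → MulAut U
  v : G → G → U
  α_one : α 1 = 1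
  v_one_left : ∀ h, v 1 h = 1
  v_one_right : ∀ g, v g 1 = 1
  α_comp : ∀ g h x, α g (α h x) = v g h * α (g * h) x * (v g h)⁻¹
  v_cocycle : ∀ g h k, v g h * v (g * h) k = α g (v h k) * v g (h * k)

theorem MonoidHom.mul_mul_inv_eq_of_map_eq {M N : Type*} [Group M] [Group N] (f : M →* N)
    {a b x : M} (hab : f a = f b) (hx : x ∈ Subgroup.centralizer f.ker) :
    a * x * a⁻¹ = b * x * b⁻¹ := by
  have hk : b⁻¹ * a ∈ f.ker := by simp [hab]
  have hcomm : b⁻¹ * a * x = x * (b⁻¹ * a) := Subgroup.mem_centralizer_iff.mp hx _ hk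
  calc a * x * a⁻¹ = b * (b⁻¹ * a * x) * (b⁻¹ * a)⁻¹ * b⁻¹ := by group
    _ = b * x * b⁻¹ := by rw [hcomm]; group

namespace CocycleCrossedAction

variable {G U : Type*} [Group G] [Group U] (A : CocycleCrossedAction G U)

def CrossedProduct (_ : CocycleCrossedAction G U) : Type _ := U × G

instance : Mul A.CrossedProduct :=
  ⟨fun x y => (x.1 * A.α x.2 y.1 * A.v x.2 y.2, x.2 * y.2)⟩

instance : One A.CrossedProduct := ⟨((1 : U), (1 : G))⟩

instance : Inv A.CrossedProduct := ⟨fun x => ((A.α x.2⁻¹ x.1 * A.v x.2⁻¹ x.2)⁻¹, x.2⁻¹)⟩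

namespace CrossedProduct

@[simp] theorem fst_mul (x y : A.CrossedProduct) :
    (x * y).1 = x.1 * A.α x.2 y.1 * A.v x.2 y.2 := rfl

@[simp] theorem snd_mul (x y : A.CrossedProduct) : (x * y).2 = x.2 * y.2 := rfl

@[simp] theorem fst_one : (1 : A.CrossedProduct).1 = 1 := rfl

@[simp] theorem snd_one : (1 : A.CrossedProduct).2 = 1 := rfl

@[simp] theorem fst_inv (x : A.CrossedProduct) :
    x⁻¹.1 = (A.α x.2⁻¹ x.1 * A.v x.2⁻¹ x.2)⁻¹ := rfl

@[simp] theorem snd_inv (x : A.CrossedProduct) : x⁻¹.2 = x.2⁻¹ := rfl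

@[ext] theorem ext {x y : A.CrossedProduct} (h₁ : x.1 = y.1) (h₂ : x.2 = y.2) : x = y :=
  Prod.ext h₁ h₂

protected theorem mul_assoc (x y z : A.CrossedProduct) : x * y * z = x * (y * z) := by
  have hv : A.α x.2 (A.v y.2 z.2) =
      A.v x.2 y.2 * A.v (x.2 * y.2) z.2 * (A.v x.2 (y.2 * z.2))⁻¹ := by
    rw [A.v_cocycle, mul_inv_cancel_right]
  ext
  · simp only [fst_mul, snd_mul, map_mul, A.α_comp, hv]
    group
  · exact mul_assoc _ _ _

protected theorem one_mul (x : A.CrossedProduct) : 1 * x = x := by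
  ext <;> simp [A.α_one, A.v_one_left]

protected theorem inv_mul_cancel (x : A.CrossedProduct) : x⁻¹ * x = 1 := by
  ext <;> simp [mul_assoc]

end CrossedProduct

open CrossedProduct

instance : Group A.CrossedProduct :=
  Group.ofLeftAxioms (CrossedProduct.mul_assoc A) (CrossedProduct.one_mul A)
    (CrossedProduct.inv_mul_cancel A)

def proj : A.CrossedProduct →* G where
  toFun := Prod.snd
  map_one' := rfl
  map_mul' _ _ := rfl

theorem mem_centralizer_ker_proj_iff (x : A.CrossedProduct) :
    x ∈ Subgroup.centralizer A.proj.ker ↔ ∀ y : U, A.α x.2 y = x.1⁻¹ * y * x.1 := by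
  have key : ∀ k : A.CrossedProduct, k.2 = 1 →
      (k * x = x * k ↔ A.α x.2 k.1 = x.1⁻¹ * k.1 * x.1) := by
    intro k hk
    rw [CrossedProduct.ext_iff]
    simp only [fst_mul, snd_mul, hk, A.α_one, MulAut.one_apply, A.v_one_left, A.v_one_right,
      mul_one, one_mul, and_true, mul_assoc, eq_inv_mul_iff_mul_eq]
    exact eq_comm
  simp only [Subgroup.mem_centralizer_iff]
  constructor
  · intro h y
    exact (key ((y, 1) : U × G) rfl).1 (h _ rfl)
  · intro h k hk
    exact (key k hk).2 (h _)

def inr (g : G) : A.CrossedProduct := ((1 : U), g)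

theorem inr_conj_inr_conj {x : A.CrossedProduct} (hx : x ∈ Subgroup.centralizer A.proj.ker)
    (g h : G) : A.inr g * (A.inr h * x * (A.inr h)⁻¹) * (A.inr g)⁻¹ =
      A.inr (g * h) * x * (A.inr (g * h))⁻¹ := by
  have hproj : A.proj (A.inr g * A.inr h) = A.proj (A.inr (g * h)) := rfl
  calc _ = A.inr g * A.inr h * x * (A.inr g * A.inr h)⁻¹ := by group
    _ = _ := A.proj.mul_mul_inv_eq_of_map_eq hproj hx

-- `H̄` of the paper: for `(u⁻¹, n)`, the condition `Ad(u) = α_n` says exactly that it commutes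
-- with `U × {e} = ker proj`.
def innerLift (H : Subgroup G) : Subgroup A.CrossedProduct :=
  H.comap A.proj ⊓ Subgroup.centralizer A.proj.ker

instance innerLift_normal (H : Subgroup G) [H.Normal] : (A.innerLift H).Normal := by
  unfold innerLift; infer_instance

theorem mem_innerLift_iff (H : Subgroup G) (x : A.CrossedProduct) :
    x ∈ A.innerLift H ↔ x.2 ∈ H ∧ ∀ y : U, A.α x.2 y = x.1⁻¹ * y * x.1 := by
  rw [innerLift, Subgroup.mem_inf, mem_centralizer_ker_proj_iff]
  rfl

end CocycleCrossedAction

theorem stmt10_general {G U : Type*} [Group G] [Group U]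
    (α : G → MulAut U) (v : G → G → U)
    (hα1 : α 1 = 1)
    (hv1 : ∀ h : G, v 1 h = 1) (hv2 : ∀ g : G, v g 1 = 1)
    (hAd : ∀ g h : G, ∀ x : U, α g (α h x) = v g h * α (g * h) x * (v g h)⁻¹)
    (hcoc : ∀ g h k : G, v g h * v (g * h) k = α g (v h k) * v g (h * k))
    (mul' : U × G → U × G → U × G)
    (hmul : ∀ a b : U × G, mul' a b = (a.1 * α a.2 b.1 * v a.2 b.2, a.2 * b.2))
    (H : Subgroup G) [H.Normal]
    (Hbar : Set (U × G))
    (hHbar : ∀ x : U × G, x ∈ Hbar ↔ x.2 ∈ H ∧ ∀ y : U, α x.2 y = x.1⁻¹ * y * x.1) :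
    -- Φ_g is well defined: (1,g)·x·(1,g)⁻¹ ∈ H̄ for x ∈ H̄
    (∀ g : G, ∀ b : U × G,
      mul' ((1 : U), g) b = ((1 : U), (1 : G)) →
      mul' b ((1 : U), g) = ((1 : U), (1 : G)) →
      ∀ x ∈ Hbar, mul' (mul' ((1 : U), g) x) b ∈ Hbar) ∧
    -- Φ_g is multiplicative on H̄
    (∀ g : G, ∀ b : U × G,
      mul' ((1 : U), g) b = ((1 : U), (1 : G)) →
      mul' b ((1 : U), g) = ((1 : U), (1 : G)) →
      ∀ x ∈ Hbar, ∀ y ∈ Hbar,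
        mul' (mul' ((1 : U), g) (mul' x y)) b =
          mul' (mul' (mul' ((1 : U), g) x) b) (mul' (mul' ((1 : U), g) y) b)) ∧
    -- Φ_e = id on H̄
    (∀ x ∈ Hbar,
      mul' (mul' ((1 : U), (1 : G)) x) ((1 : U), (1 : G)) = x) ∧
    -- Φ_g ∘ Φ_h = Φ_{gh} on H̄
    (∀ g h : G, ∀ bg bh bgh : U × G,
      mul' ((1 : U), g) bg = ((1 : U), (1 : G)) →
      mul' bg ((1 : U), g) = ((1 : U), (1 : G)) →
      mul' ((1 : U), h) bh = ((1 : U), (1 : G)) →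
      mul' bh ((1 : U), h) = ((1 : U), (1 : G)) →
      mul' ((1 : U), g * h) bgh = ((1 : U), (1 : G)) →
      mul' bgh ((1 : U), g * h) = ((1 : U), (1 : G)) →
      ∀ x ∈ Hbar,
        mul' (mul' ((1 : U), g) (mul' (mul' ((1 : U), h) x) bh)) bg =
          mul' (mul' ((1 : U), g * h) x) bgh) := by
  let A : CocycleCrossedAction G U := ⟨α, v, hα1, hv1, hv2, hAd, hcoc⟩
  obtain rfl : mul' = fun a b => ((a : A.CrossedProduct) * b : A.CrossedProduct) :=
    funext₂ hmul
  have mem_Hbar : ∀ x : A.CrossedProduct, x ∈ Hbar ↔ x ∈ A.innerLift H := fun x =>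
    (hHbar x).trans (A.mem_innerLift_iff H x).symm
  have inv_inr : ∀ {g : G} {b : A.CrossedProduct}, A.inr g * b = 1 → b = (A.inr g)⁻¹ :=
    eq_inv_of_mul_eq_one_right
  refine ⟨?_, ?_, ?_, ?_⟩
  · intro g b hb _ (x : A.CrossedProduct) hx
    obtain rfl := inv_inr hb
    exact (mem_Hbar _).2 ((A.innerLift_normal H).conj_mem x ((mem_Hbar x).1 hx) (A.inr g))
  · intro g b hb _ x _ y _
    obtain rfl := inv_inr hb
    exact (conj_mul (b := A.inr g)).symm
  · intro (x : A.CrossedProduct) _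
    exact (mul_one (1 * x)).trans (one_mul x)
  · intro g h bg bh bgh hbg _ hbh _ hbgh _ x hx
    obtain rfl := inv_inr hbg
    obtain rfl := inv_inr hbh
    obtain rfl := inv_inr hbgh
    exact A.inr_conj_inr_conj ((mem_Hbar x).1 hx).2 g h

/-- Conjugation by `(1,g)` defines an action `Φ` of `G` on `H̄`:
each `Φ_g` maps `H̄` to `H̄`, is multiplicative on `H̄`, `Φ_e = id`, and
`Φ_g ∘ Φ_h = Φ_{gh}` on `H̄`. -/
theorem stmt10 {G U : Type*} [Group G] [Group U]
    (α : G → MulAut U) (v : G → G → U)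
    (hα1 : α 1 = 1)
    (hv1 : ∀ h : G, v 1 h = 1) (hv2 : ∀ g : G, v g 1 = 1)
    (hAd : ∀ g h : G, ∀ x : U, α g (α h x) = v g h * α (g * h) x * (v g h)⁻¹)
    (hcoc : ∀ g h k : G, v g h * v (g * h) k = α g (v h k) * v g (h * k))
    (mul' : U × G → U × G → U × G)
    (hmul : ∀ a b : U × G, mul' a b = (a.1 * α a.2 b.1 * v a.2 b.2, a.2 * b.2))
    (H : Subgroup G) [H.Normal]
    (hinner : ∀ n ∈ H, ∃ u : U, ∀ y : U, α n y = u * y * u⁻¹)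
    (Hbar : Set (U × G))
    (hHbar : ∀ x : U × G, x ∈ Hbar ↔ x.2 ∈ H ∧ ∀ y : U, α x.2 y = x.1⁻¹ * y * x.1) :
    -- Φ_g is well defined: (1,g)·x·(1,g)⁻¹ ∈ H̄ for x ∈ H̄
    (∀ g : G, ∀ b : U × G,
      mul' ((1 : U), g) b = ((1 : U), (1 : G)) →
      mul' b ((1 : U), g) = ((1 : U), (1 : G)) →
      ∀ x ∈ Hbar, mul' (mul' ((1 : U), g) x) b ∈ Hbar) ∧
    -- Φ_g is multiplicative on H̄
    (∀ g : G, ∀ b : U × G,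
      mul' ((1 : U), g) b = ((1 : U), (1 : G)) →
      mul' b ((1 : U), g) = ((1 : U), (1 : G)) →
      ∀ x ∈ Hbar, ∀ y ∈ Hbar,
        mul' (mul' ((1 : U), g) (mul' x y)) b =
          mul' (mul' (mul' ((1 : U), g) x) b) (mul' (mul' ((1 : U), g) y) b)) ∧
    -- Φ_e = id on H̄
    (∀ x ∈ Hbar,
      mul' (mul' ((1 : U), (1 : G)) x) ((1 : U), (1 : G)) = x) ∧
    -- Φ_g ∘ Φ_h = Φ_{gh} on H̄
    (∀ g h : G, ∀ bg bh bgh : U × G,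
      mul' ((1 : U), g) bg = ((1 : U), (1 : G)) →
      mul' bg ((1 : U), g) = ((1 : U), (1 : G)) →
      mul' ((1 : U), h) bh = ((1 : U), (1 : G)) →
      mul' bh ((1 : U), h) = ((1 : U), (1 : G)) →
      mul' ((1 : U), g * h) bgh = ((1 : U), (1 : G)) →
      mul' bgh ((1 : U), g * h) = ((1 : U), (1 : G)) →
      ∀ x ∈ Hbar,
        mul' (mul' ((1 : U), g) (mul' (mul' ((1 : U), h) x) bh)) bg =
          mul' (mul' ((1 : U), g * h) x) bgh) :=
  stmt10_general α v hα1 hv1 hv2 hAd hcoc mul' hmul H Hbar hHbar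
end
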